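/- arXiv:1809.00552 — 11 statements merged into one kernel-verified Lean document; each statement's English description precedes it below -/
import Mathlib

section
/- Let m > 1 and σ_* = √(2(m+1)). Define B = (m-1)²/(m(σ_*+2)(mσ_*+m+1)), α_* = (σ_*+2)/(σ_*(m-1)), β_* = 1/σ_*, and f_*(ξ) = ξ^{2/(m-1)} · ((m-1)/(2m(m+1)) - B ξ^{σ_*})^{1/(m-1)} for ξ ∈ [0, ξ₁) where ξ₁ = ((m-1)/(2m(m+1)B))^{1/σ_*}. Then f_* satisfies the ordinary differential equation (f^m)''(ξ) - α_* f(ξ) + β_* ξ f'(ξ) + ξ^{σ_*} f(ξ) = 0 on (0, ξ₁). -/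
set_option maxHeartbeats 4000000

lemma aux_hasDerivAt_w (B σ C : ℝ) {x : ℝ} (hx : 0 < x) :
    HasDerivAt (fun y : ℝ => C - B * y ^ σ) (-(B * (σ * x ^ (σ - 1)))) x := by
  have h := ((Real.hasDerivAt_rpow_const (x := x) (p := σ) (Or.inl hx.ne')).const_mul B).const_sub C
  simpa using h

lemma aux_hasDerivAt_pw (B σ C p q : ℝ) {x : ℝ} (hx : 0 < x) (hw : 0 < C - B * x ^ σ) :
    HasDerivAt (fun y : ℝ => y ^ p * (C - B * y ^ σ) ^ q)
      (p * x ^ (p - 1) * (C - B * x ^ σ) ^ q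
        + x ^ p * (-(B * (σ * x ^ (σ - 1))) * q * (C - B * x ^ σ) ^ (q - 1))) x :=
  (Real.hasDerivAt_rpow_const (x := x) (p := p) (Or.inl hx.ne')).mul
    ((aux_hasDerivAt_w B σ C hx).rpow_const (Or.inl hw.ne'))

/-- The explicit blow-up self-similar profile at the critical exponent
`σ* = √(2(m+1))` solves the profile ODE on `(0, ξ₁)`. -/
theorem explicit_profile_solves_ODE
    (m σ B α β ξ₁ : ℝ) (hm : 1 < m)
    (hσ : σ = Real.sqrt (2 * (m + 1)))
    (hB : B = (m - 1) ^ 2 / (m * (σ + 2) * (m * σ + m + 1)))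
    (hα : α = (σ + 2) / (σ * (m - 1)))
    (hβ : β = 1 / σ)
    (hξ₁ : ξ₁ = ((m - 1) / (2 * m * (m + 1) * B)) ^ (1 / σ))
    (f : ℝ → ℝ)
    (hf : ∀ ξ ∈ Set.Ico (0 : ℝ) ξ₁,
      f ξ = ξ ^ (2 / (m - 1)) *
        ((m - 1) / (2 * m * (m + 1)) - B * ξ ^ σ) ^ (1 / (m - 1))) :
    ∀ ξ ∈ Set.Ioo (0 : ℝ) ξ₁,
      deriv (deriv (fun s => f s ^ m)) ξ - α * f ξ + β * ξ * deriv f ξ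
        + ξ ^ σ * f ξ = 0 := by
  have hσ2 : σ ^ 2 = 2 * (m + 1) := by
    rw [hσ]; exact Real.sq_sqrt (by nlinarith)
  have hσpos : 0 < σ := by
    rw [hσ]; exact Real.sqrt_pos.mpr (by nlinarith)
  have hσ2lt : 2 < σ := by nlinarith
  have hm1 : (0:ℝ) < m - 1 := by linarith
  have hmpos : (0:ℝ) < m := by linarith
  have hBpos : 0 < B := by
    rw [hB]; exact div_pos (pow_pos hm1 2) (by nlinarith)
  have hCpos : 0 < (m-1)/(2*m*(m+1)) := div_pos hm1 (by nlinarith)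
  have hξ₁σ : ξ₁ ^ σ = (m-1)/(2*m*(m+1)) / B := by
    rw [hξ₁, ← div_div, ← Real.rpow_mul (le_of_lt (div_pos hCpos hBpos)),
      one_div_mul_cancel hσpos.ne', Real.rpow_one]
  have hW : ∀ x ∈ Set.Ioo (0:ℝ) ξ₁, 0 < (m-1)/(2*m*(m+1)) - B * x ^ σ := by
    intro x hx
    have h1 : x ^ σ < ξ₁ ^ σ := Real.rpow_lt_rpow hx.1.le hx.2 hσpos
    have h2 : B * x ^ σ < B * ξ₁ ^ σ := mul_lt_mul_of_pos_left h1 hBpos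
    rw [hξ₁σ] at h2
    have h3 : B * ((m-1)/(2*m*(m+1))/B) = (m-1)/(2*m*(m+1)) := by
      field_simp
    rw [h3] at h2; linarith
  intro ξ hξ
  have hξ0 : 0 < ξ := hξ.1
  have hWξ : 0 < (m-1)/(2*m*(m+1)) - B * ξ ^ σ := hW ξ hξ
  -- f^m agrees with the explicit power function on Ioo
  have hfg : ∀ x ∈ Set.Ioo (0:ℝ) ξ₁, f x ^ m =
      x ^ (2*m/(m-1)) * ((m-1)/(2*m*(m+1)) - B * x ^ σ) ^ (m/(m-1)) := by
    intro x hx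
    rw [hf x ⟨hx.1.le, hx.2⟩,
      Real.mul_rpow (Real.rpow_nonneg hx.1.le _) (Real.rpow_nonneg (hW x hx).le _),
      ← Real.rpow_mul hx.1.le, ← Real.rpow_mul (hW x hx).le,
      show 2/(m-1)*m = 2*m/(m-1) by ring, show 1/(m-1)*m = m/(m-1) by ring]
  -- the first derivative of f^m on Ioo, in a re-differentiable form
  have hP1eq : ∀ x ∈ Set.Ioo (0:ℝ) ξ₁,
      deriv (fun s => f s ^ m) x =
        (2*m/(m-1)) * (x ^ (2*m/(m-1) - 1) * ((m-1)/(2*m*(m+1)) - B * x ^ σ) ^ (m/(m-1)))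
        + (-(B * σ * (m/(m-1)))) * (x ^ (2*m/(m-1) + (σ - 1)) * ((m-1)/(2*m*(m+1)) - B * x ^ σ) ^ (m/(m-1) - 1)) := by
    intro x hx
    have hev : (fun s => f s ^ m) =ᶠ[nhds x]
        (fun y => y ^ (2*m/(m-1)) * ((m-1)/(2*m*(m+1)) - B * y ^ σ) ^ (m/(m-1))) :=
      Filter.eventuallyEq_of_mem (isOpen_Ioo.mem_nhds hx) hfg
    rw [hev.deriv_eq, (aux_hasDerivAt_pw B σ _ _ _ hx.1 (hW x hx)).deriv]
    rw [Real.rpow_add hx.1 (2*m/(m-1)) (σ-1)]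
    ring
  -- second derivative of f^m at ξ
  have hD2 : deriv (deriv (fun s => f s ^ m)) ξ =
      (2*m/(m-1)) * ((2*m/(m-1) - 1) * ξ ^ (2*m/(m-1) - 1 - 1) * ((m-1)/(2*m*(m+1)) - B * ξ ^ σ) ^ (m/(m-1))
        + ξ ^ (2*m/(m-1) - 1) * (-(B * (σ * ξ ^ (σ - 1))) * (m/(m-1)) * ((m-1)/(2*m*(m+1)) - B * ξ ^ σ) ^ (m/(m-1) - 1)))
      + (-(B * σ * (m/(m-1)))) * ((2*m/(m-1) + (σ-1)) * ξ ^ (2*m/(m-1) + (σ-1) - 1) * ((m-1)/(2*m*(m+1)) - B * ξ ^ σ) ^ (m/(m-1) - 1)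
        + ξ ^ (2*m/(m-1) + (σ-1)) * (-(B * (σ * ξ ^ (σ - 1))) * (m/(m-1) - 1) * ((m-1)/(2*m*(m+1)) - B * ξ ^ σ) ^ (m/(m-1) - 1 - 1))) := by
    have hev2 : deriv (fun s => f s ^ m) =ᶠ[nhds ξ]
        (fun x => (2*m/(m-1)) * (x ^ (2*m/(m-1) - 1) * ((m-1)/(2*m*(m+1)) - B * x ^ σ) ^ (m/(m-1)))
          + (-(B * σ * (m/(m-1)))) * (x ^ (2*m/(m-1) + (σ - 1)) * ((m-1)/(2*m*(m+1)) - B * x ^ σ) ^ (m/(m-1) - 1))) :=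
      Filter.eventuallyEq_of_mem (isOpen_Ioo.mem_nhds hξ) hP1eq
    rw [hev2.deriv_eq]
    exact (((aux_hasDerivAt_pw B σ _ _ _ hξ0 hWξ).const_mul (2*m/(m-1))).add
      ((aux_hasDerivAt_pw B σ _ _ _ hξ0 hWξ).const_mul (-(B * σ * (m/(m-1)))))).deriv
  -- first derivative of f at ξ
  have hDf : deriv f ξ =
      (2/(m-1)) * ξ ^ (2/(m-1) - 1) * ((m-1)/(2*m*(m+1)) - B * ξ ^ σ) ^ (1/(m-1))
        + ξ ^ (2/(m-1)) * (-(B * (σ * ξ ^ (σ - 1))) * (1/(m-1)) * ((m-1)/(2*m*(m+1)) - B * ξ ^ σ) ^ (1/(m-1) - 1)) := by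
    have hevf : f =ᶠ[nhds ξ]
        (fun y => y ^ (2/(m-1)) * ((m-1)/(2*m*(m+1)) - B * y ^ σ) ^ (1/(m-1))) :=
      Filter.eventuallyEq_of_mem (isOpen_Ioo.mem_nhds hξ)
        (fun x hx => hf x ⟨hx.1.le, hx.2⟩)
    rw [hevf.deriv_eq, (aux_hasDerivAt_pw B σ _ _ _ hξ0 hWξ).deriv]
  rw [hD2, hDf, hf ξ ⟨hξ0.le, hξ.2⟩]
  -- rpow atom rewrites
  rw [show 2*m/(m-1) - 1 - 1 = 2/(m-1) by field_simp; try ring]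
  rw [show 2*m/(m-1) - 1 = 2/(m-1) + 1 by field_simp; try ring]
  rw [show 2*m/(m-1) + (σ-1) - 1 = 2/(m-1) + σ by field_simp; try ring]
  rw [show 2*m/(m-1) + (σ-1) = 2/(m-1) + σ + 1 by field_simp; try ring]
  rw [show m/(m-1) - 1 - 1 = 1/(m-1) - 1 by field_simp; try ring]
  rw [show m/(m-1) - 1 = 1/(m-1) by field_simp; try ring]
  rw [show m/(m-1) = 1/(m-1) + 1 by field_simp; try ring]
  rw [Real.rpow_add hξ0 (2/(m-1)) 1, Real.rpow_add hξ0 (2/(m-1) + σ) 1,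
    Real.rpow_add hξ0 (2/(m-1)) σ, Real.rpow_one,
    Real.rpow_sub hξ0 σ 1, Real.rpow_one,
    Real.rpow_sub hξ0 (2/(m-1)) 1, Real.rpow_one]
  rw [Real.rpow_add hWξ (1/(m-1)) 1, Real.rpow_one]
  have hDD : ((m-1)/(2*m*(m+1)) - B * ξ ^ σ) ^ (1/(m-1))
      = ((m-1)/(2*m*(m+1)) - B * ξ ^ σ) ^ (1/(m-1) - 1) * ((m-1)/(2*m*(m+1)) - B * ξ ^ σ) := by
    rw [← Real.rpow_add_one hWξ.ne' (1/(m-1)-1)]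
    congr 1
    ring
  rw [hDD, hB, hα, hβ]
  set A := ξ ^ (2/(m-1)) with hA
  set Z := ξ ^ σ with hZ
  set D2 := ((m-1)/(2*m*(m+1)) - (m - 1) ^ 2 / (m * (σ + 2) * (m * σ + m + 1)) * Z) ^ (1/(m-1) - 1) with hD2
  clear_value A Z D2
  have n1 : m - 1 ≠ 0 := hm1.ne'
  have n2 : m ≠ 0 := hmpos.ne'
  have n3 : m + 1 ≠ 0 := by nlinarith
  have n4 : σ ≠ 0 := hσpos.ne'
  have n5 : ξ ≠ 0 := hξ0.ne'
  have n6 : σ + 2 ≠ 0 := by nlinarith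
  have n7 : m * σ + m + 1 ≠ 0 := by nlinarith
  have hm' : m = σ^2/2 - 1 := by nlinarith
  field_simp [n1, n2, n3, n4, n5, n6, n7]
  rw [hm']
  ring
end

section
/- Let m > 1, σ > 0, α = (σ+2)/(σ(m-1)), β = 1/σ. There is no twice continuously differentiable f : (0,∞) → (0,∞) solving (f^m)''(ξ) - α f(ξ) + β ξ f'(ξ) + ξ^σ f(ξ) = 0 such that f(ξ) → L as ξ → ∞ for some L ∈ (0,∞) with f eventually monotone. -/
open Filter Set

/-- No positive solution of the profile ODE converges, eventually monotonically,
to a finite nonzero limit at infinity. -/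
theorem no_finite_nonzero_limit
    (m σ α β : ℝ) (hm : 1 < m) (hσ : 0 < σ)
    (hα : α = (σ + 2) / (σ * (m - 1))) (hβ : β = 1 / σ) :
    ¬ ∃ (f : ℝ → ℝ) (L R : ℝ), 0 < L ∧
      (∀ ξ > (0 : ℝ), 0 < f ξ) ∧
      ContDiffOn ℝ 2 f (Set.Ioi 0) ∧
      (∀ ξ > (0 : ℝ),
        deriv (deriv (fun s => f s ^ m)) ξ - α * f ξ + β * ξ * deriv f ξ
          + ξ ^ σ * f ξ = 0) ∧
      Filter.Tendsto f Filter.atTop (nhds L) ∧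
      (MonotoneOn f (Set.Ici R) ∨ AntitoneOn f (Set.Ici R)) := by
  rintro ⟨f, L, R, hL, hfpos, hf2, hode, hlim, -⟩
  have hβ0 : 0 < β := by rw [hβ]; positivity
  set g : ℝ → ℝ := fun s => f s ^ m with hgdef
  have hopen : IsOpen (Ioi (0:ℝ)) := isOpen_Ioi
  -- f is differentiable on Ioi 0
  have hfdiff : ∀ ξ > (0:ℝ), DifferentiableAt ℝ f ξ := by
    intro ξ hξ
    exact (hf2.differentiableOn two_ne_zero).differentiableAt
      (hopen.mem_nhds hξ)
  -- deriv f is differentiable on Ioi 0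
  have hf'diff : ∀ ξ > (0:ℝ), DifferentiableAt ℝ (deriv f) ξ := by
    intro ξ hξ
    exact ((hf2.deriv_of_isOpen hopen (by decide : (1:WithTop ℕ∞) + 1 ≤ 2)).differentiableOn
      one_ne_zero).differentiableAt (hopen.mem_nhds hξ)
  -- derivative of g
  have hgd : ∀ ξ > (0:ℝ), HasDerivAt g (deriv f ξ * m * f ξ ^ (m - 1)) ξ := by
    intro ξ hξ
    exact ((hfdiff ξ hξ).hasDerivAt.rpow_const (Or.inl (hfpos ξ hξ).ne'))
  -- deriv g is differentiable on Ioi 0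
  have hg'diff : ∀ ξ > (0:ℝ), HasDerivAt (deriv g) (deriv (deriv g) ξ) ξ := by
    intro ξ hξ
    have hev : deriv g =ᶠ[nhds ξ] fun s => deriv f s * m * f s ^ (m - 1) := by
      filter_upwards [hopen.mem_nhds hξ] with s hs
      exact (hgd s hs).deriv
    have hφ : DifferentiableAt ℝ (fun s => deriv f s * m * f s ^ (m - 1)) ξ := by
      exact ((hf'diff ξ hξ).mul_const m).mul
        ((hfdiff ξ hξ).rpow_const (Or.inl (hfpos ξ hξ).ne'))
    exact (hφ.congr_of_eventuallyEq hev).hasDerivAt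
  -- the auxiliary function H
  set H : ℝ → ℝ := fun s => deriv g s + β * s * f s with hHdef
  have hHd : ∀ ξ > (0:ℝ), HasDerivAt H ((α + β - ξ ^ σ) * f ξ) ξ := by
    intro ξ hξ
    have h1 : HasDerivAt (fun s => β * s * f s)
        (β * f ξ + β * ξ * deriv f ξ) ξ := by
      have : HasDerivAt (fun s => β * s * f s) (β * 1 * f ξ + β * id ξ * deriv f ξ) ξ := ((hasDerivAt_id ξ).const_mul β).mul (hfdiff ξ hξ).hasDerivAt
      convert this using 1
      simp only [id_eq]
      ring
    have h2 := (hg'diff ξ hξ).add h1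
    have hodeξ := hode ξ hξ
    have : deriv (deriv g) ξ + (β * f ξ + β * ξ * deriv f ξ)
        = (α + β - ξ ^ σ) * f ξ := by
      simp only [hgdef] at hodeξ ⊢
      linarith [hodeξ]
    rwa [this] at h2
  -- find ξ0 past which H' ≤ -1
  have ev1 : ∀ᶠ ξ in atTop, L / 2 ≤ f ξ :=
    hlim.eventually (eventually_ge_nhds (by linarith))
  have ev2 : ∀ᶠ ξ : ℝ in atTop, (α + β) + 2 / L ≤ ξ ^ σ :=
    (tendsto_rpow_atTop hσ).eventually_ge_atTop _
  obtain ⟨N, hN⟩ := (ev1.and (ev2.and (eventually_gt_atTop (0:ℝ)))).exists_forall_of_atTop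
  obtain ⟨ξ0, hξ0N, hξ0pos⟩ : ∃ ξ0, N ≤ ξ0 ∧ 0 < ξ0 := ⟨max N 1, le_max_left _ _, lt_of_lt_of_le one_pos (le_max_right _ _)⟩
  have key : ∀ ξ ≥ ξ0, (α + β - ξ ^ σ) * f ξ ≤ -1 := by
    intro ξ hξ
    obtain ⟨h1, h2, h3⟩ := hN ξ (le_trans hξ0N hξ)
    have hfp : (0:ℝ) < L / 2 := by linarith
    have : (2 / L) * (L / 2) ≤ (ξ ^ σ - (α + β)) * f ξ := by
      apply mul_le_mul (by linarith) h1 (le_of_lt hfp)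
      have : (0:ℝ) < 2 / L := by positivity
      linarith
    have hLL : (2 / L) * (L / 2) = 1 := by field_simp
    nlinarith
  -- H ξ + ξ is antitone on Ici ξ0
  have hant : AntitoneOn (fun s => H s + s) (Ici ξ0) := by
    apply antitoneOn_of_deriv_nonpos (convex_Ici ξ0)
    · intro x hx
      exact ((hHd x (lt_of_lt_of_le hξ0pos hx)).add (hasDerivAt_id' x)).continuousAt.continuousWithinAt
    · intro x hx
      rw [interior_Ici] at hx
      exact ((hHd x (lt_trans hξ0pos hx)).add (hasDerivAt_id' x)).differentiableAt.differentiableWithinAt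
    · intro x hx
      rw [interior_Ici] at hx
      rw [HasDerivAt.deriv (f := fun s => H s + s) ((hHd x (lt_trans hξ0pos hx)).add (hasDerivAt_id' x))]
      have := key x (le_of_lt hx)
      linarith
  -- hence deriv g ξ ≤ -1 for ξ ≥ ξ1
  set ξ1 : ℝ := max ξ0 (ξ0 + H ξ0 + 1) with hξ1def
  have hξ1 : ξ0 ≤ ξ1 := le_max_left _ _
  have hξ1pos : 0 < ξ1 := lt_of_lt_of_le hξ0pos hξ1
  have hg'le : ∀ ξ ≥ ξ1, deriv g ξ ≤ -1 := by
    intro ξ hξ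
    have hξ0ξ : ξ0 ≤ ξ := le_trans hξ1 hξ
    have hHle : H ξ + ξ ≤ H ξ0 + ξ0 :=
      hant self_mem_Ici hξ0ξ hξ0ξ
    have hξpos : (0:ℝ) < ξ := lt_of_lt_of_le hξ0pos hξ0ξ
    have hb : β * ξ * f ξ ≥ 0 :=
      mul_nonneg (mul_nonneg hβ0.le hξpos.le) (hfpos ξ hξpos).le
    have h2 : ξ0 + H ξ0 + 1 ≤ ξ := le_trans (le_max_right _ _) hξ
    have : deriv g ξ = H ξ - β * ξ * f ξ := by simp [hHdef]
    linarith
  -- g ξ + ξ is antitone on Ici ξ1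
  have hant2 : AntitoneOn (fun s => g s + s) (Ici ξ1) := by
    apply antitoneOn_of_deriv_nonpos (convex_Ici ξ1)
    · intro x hx
      exact ((hgd x (lt_of_lt_of_le hξ1pos hx)).add (hasDerivAt_id' x)).continuousAt.continuousWithinAt
    · intro x hx
      rw [interior_Ici] at hx
      exact ((hgd x (lt_trans hξ1pos hx)).add (hasDerivAt_id' x)).differentiableAt.differentiableWithinAt
    · intro x hx
      rw [interior_Ici] at hx
      have hgdx := (hgd x (lt_trans hξ1pos hx))
      rw [HasDerivAt.deriv (f := fun s => g s + s) (hgdx.add (hasDerivAt_id' x))]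
      have := hg'le x (le_of_lt hx)
      rw [hgdx.deriv] at this
      linarith
  -- final contradiction
  have hgpos : ∀ ξ > (0:ℝ), 0 < g ξ := by
    intro ξ hξ
    exact Real.rpow_pos_of_pos (hfpos ξ hξ) m
  set b : ℝ := ξ1 + g ξ1 + 1 with hbdef
  have hgξ1 : 0 < g ξ1 := hgpos ξ1 hξ1pos
  have hb1 : ξ1 ≤ b := by linarith
  have : g b + b ≤ g ξ1 + ξ1 := hant2 self_mem_Ici hb1 hb1
  have hbpos : 0 < b := by linarith
  have := hgpos b hbpos
  linarith
end

section
/- Let m > 1, σ > 0, α = (σ+2)/(σ(m-1)), β = 1/σ. There is no twice continuously differentiable f : (0,∞) → (0,∞) solving (f^m)''(ξ) - α f(ξ) + β ξ f'(ξ) + ξ^σ f(ξ) = 0 such that f is eventually increasing and f(ξ) → ∞ as ξ → ∞. -/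
/-- No positive solution of the profile ODE is eventually increasing and tends
to infinity. -/
theorem no_increasing_to_infinity
    (m σ α β : ℝ) (hm : 1 < m) (hσ : 0 < σ)
    (hα : α = (σ + 2) / (σ * (m - 1))) (hβ : β = 1 / σ) :
    ¬ ∃ (f : ℝ → ℝ) (R : ℝ),
      (∀ ξ > (0 : ℝ), 0 < f ξ) ∧
      ContDiffOn ℝ 2 f (Set.Ioi 0) ∧
      (∀ ξ > (0 : ℝ),
        deriv (deriv (fun s => f s ^ m)) ξ - α * f ξ + β * ξ * deriv f ξ
          + ξ ^ σ * f ξ = 0) ∧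
      StrictMonoOn f (Set.Ici R) ∧
      Filter.Tendsto f Filter.atTop Filter.atTop := by
  rintro ⟨f, R, hpos, hf, hode, hmono, htop⟩
  have hm0 : (0:ℝ) < m := by linarith
  have hβ0 : 0 < β := by rw [hβ]; positivity
  set g : ℝ → ℝ := fun s => f s ^ m with hgdef
  have hgC : ContDiffOn ℝ 2 g (Set.Ioi 0) := fun x hx =>
    ((hf.contDiffAt (isOpen_Ioi.mem_nhds hx)).rpow_const_of_ne
      (ne_of_gt (hpos x hx))).contDiffWithinAt
  have hg1 : ContDiffOn ℝ 1 (deriv g) (Set.Ioi 0) :=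
    hgC.deriv_of_isOpen isOpen_Ioi (by norm_num)
  have hg'diff : ∀ x ∈ Set.Ioi (0:ℝ), DifferentiableAt ℝ (deriv g) x := fun x hx =>
    (hg1.contDiffAt (isOpen_Ioi.mem_nhds hx)).differentiableAt (by norm_num)
  have hg'cont : ContinuousOn (deriv g) (Set.Ioi 0) := hg1.continuousOn
  have hgdiff : ∀ x ∈ Set.Ioi (0:ℝ), DifferentiableAt ℝ g x := fun x hx =>
    (hgC.contDiffAt (isOpen_Ioi.mem_nhds hx)).differentiableAt (by norm_num)
  have hfdiff : ∀ x ∈ Set.Ioi (0:ℝ), DifferentiableAt ℝ f x := fun x hx =>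
    (hf.contDiffAt (isOpen_Ioi.mem_nhds hx)).differentiableAt (by norm_num)
  -- f' ≥ 0 past R
  have hderiv_nonneg : ∀ x, R < x → 0 < x → 0 ≤ deriv f x := by
    intro x hRx hx0
    have hd : HasDerivAt f (deriv f x) x := (hfdiff x hx0).hasDerivAt
    have hslope : Filter.Tendsto (slope f x) (nhdsWithin x (Set.Ioi x)) (nhds (deriv f x)) :=
      (hasDerivAt_iff_tendsto_slope.mp hd).mono_left
        (nhdsWithin_mono x (fun y hy => ne_of_gt hy))
    refine ge_of_tendsto hslope ?_
    filter_upwards [self_mem_nhdsWithin] with y hy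
    have hxy : x < y := hy
    have : f x < f y := hmono (le_of_lt hRx) (le_trans (le_of_lt hRx) (le_of_lt hxy)) hxy
    rw [slope_def_field]
    exact div_nonneg (by linarith) (by linarith)
  -- thresholds
  obtain ⟨N, hN⟩ := Filter.eventually_atTop.mp
    ((tendsto_rpow_atTop hσ).eventually_ge_atTop (α + 1))
  obtain ⟨M, hM⟩ := Filter.eventually_atTop.mp (htop.eventually_ge_atTop 1)
  set ξ₀ : ℝ := max (max N M) (max (R + 1) 1) with hξ₀def
  have hξ₀N : N ≤ ξ₀ := le_trans (le_max_left _ _) (le_max_left _ _)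
  have hξ₀M : M ≤ ξ₀ := le_trans (le_max_right _ _) (le_max_left _ _)
  have hξ₀R : R < ξ₀ := lt_of_lt_of_le (by linarith) (le_trans (le_max_left _ _) (le_max_right _ _))
  have hξ₀1 : (1:ℝ) ≤ ξ₀ := le_trans (le_max_right _ _) (le_max_right _ _)
  have hξ₀0 : (0:ℝ) < ξ₀ := by linarith
  -- second derivative bound
  have hkey : ∀ x, ξ₀ ≤ x → deriv (deriv g) x ≤ -1 := by
    intro x hx
    have hx0 : (0:ℝ) < x := by linarith
    have hfx : 1 ≤ f x := hM x (by linarith)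
    have hxs : α + 1 ≤ x ^ σ := hN x (by linarith)
    have hfx' : 0 ≤ deriv f x := hderiv_nonneg x (by linarith) hx0
    have h1 : 0 ≤ β * x * deriv f x := by positivity
    have heq := hode x hx0
    nlinarith [mul_le_mul_of_nonneg_right hxs (le_trans zero_le_one hfx)]
  -- deriv g + id is antitone on [ξ₀, ∞)
  have hIci : Set.Ici ξ₀ ⊆ Set.Ioi 0 := fun y hy => lt_of_lt_of_le hξ₀0 hy
  have hanti : AntitoneOn (fun x => deriv g x + x) (Set.Ici ξ₀) := by
    apply antitoneOn_of_deriv_nonpos (convex_Ici ξ₀)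
    · exact (hg'cont.mono hIci).add continuousOn_id
    · intro x hx
      rw [interior_Ici] at hx
      exact ((hg'diff x (lt_trans hξ₀0 hx)).add differentiableAt_id).differentiableWithinAt
    · intro x hx
      rw [interior_Ici] at hx
      rw [deriv_fun_add (hg'diff x (lt_trans hξ₀0 hx)) differentiableAt_fun_id, deriv_id'']
      have := hkey x (le_of_lt hx)
      show deriv (deriv g) x + 1 ≤ 0
      linarith
  -- deriv g is eventually nonpositive
  set ξ₁ : ℝ := max ξ₀ (deriv g ξ₀ + ξ₀) with hξ₁def
  have hξ₁0 : ξ₀ ≤ ξ₁ := le_max_left _ _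
  have hg'nonpos : ∀ x, ξ₁ ≤ x → deriv g x ≤ 0 := by
    intro x hx
    have hx0 : ξ₀ ≤ x := le_trans hξ₁0 hx
    have := hanti (Set.self_mem_Ici) hx0 hx0
    have h2 : deriv g ξ₀ + ξ₀ ≤ x := le_trans (le_max_right _ _) hx
    simp only at this
    linarith
  -- g antitone past ξ₁
  have hIci1 : Set.Ici ξ₁ ⊆ Set.Ioi 0 := fun y hy => lt_of_lt_of_le hξ₀0 (le_trans hξ₁0 hy)
  have hganti : AntitoneOn g (Set.Ici ξ₁) := by
    apply antitoneOn_of_deriv_nonpos (convex_Ici ξ₁)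
    · exact hgC.continuousOn.mono hIci1
    · intro x hx
      rw [interior_Ici] at hx
      exact (hgdiff x (hIci1 (Set.mem_Ici.mpr (le_of_lt hx)))).differentiableWithinAt
    · intro x hx
      rw [interior_Ici] at hx
      exact hg'nonpos x (le_of_lt hx)
  -- contradiction with g → ∞
  have hgtop : Filter.Tendsto g Filter.atTop Filter.atTop :=
    (tendsto_rpow_atTop hm0).comp htop
  obtain ⟨x, hx⟩ := Filter.eventually_atTop.mp
    ((hgtop.eventually_gt_atTop (g ξ₁)).and (Filter.eventually_ge_atTop ξ₁))
  have h3 := hx x le_rfl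
  have h4 := hganti Set.self_mem_Ici h3.2 h3.2
  exact absurd h4 (not_le.mpr h3.1)
end

section
/- Let m > 1, σ > 0, α = (σ+2)/(σ(m-1)), β = 1/σ. The Jacobian at P₂ = ((m-1)/(2(m+1)α), 1/((m+1)α), 0) of the vector field F(X,Y,Z) = (X((m-1)Y - 2X), -Y² - (β/α)Y + X - XY - XZ, σXZ) has eigenvalues λ₁, λ₂, λ₃ satisfying λ₁ + λ₂ = -(3m+1+2β(m+1))/(2(m+1)α) < 0, λ₁λ₂ = (m-1)/(2(m+1)α²) > 0, and λ₃ = σ(m-1)/(2(m+1)α) > 0. In particular λ₁ and λ₂ have negative real part. -/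
lemma deriv_quad_aux (f : ℝ → ℝ) (a b c : ℝ) (h : ∀ s, f s = c + b*s + a*s^2) :
    deriv f 0 = b := by
  have hf : f = fun s => c + b*s + a*s^2 := funext h
  subst hf
  have h1 : HasDerivAt (fun s : ℝ => c + b*s + a*s^2) (b + a*(2*0^1)) 0 := by
    have := ((hasDerivAt_const (0:ℝ) c).add ((hasDerivAt_id (0:ℝ)).const_mul b)).add
      ((hasDerivAt_pow 2 (0:ℝ)).const_mul a)
    have e : (fun s : ℝ => c + b*s + a*s^2) = ((fun x => c) + fun y => b * id y) + fun y => a * y ^ 2 := by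
      ext s; simp
    rw [e]; exact this.congr_deriv (by norm_num)
  simpa using h1.deriv

lemma quad_roots_aux (t q : ℝ) (ht : t < 0) (hq : 0 < q) :
    ∃ l1 l2 : ℂ, l1^2 = (t:ℂ)*l1 - q ∧ l2^2 = (t:ℂ)*l2 - q ∧ l1 + l2 = (t:ℂ) ∧
      l1*l2 = (q:ℂ) ∧ l1.re < 0 ∧ l2.re < 0 := by
  rcases le_or_gt 0 (t^2 - 4*q) with hD | hD
  · set r := Real.sqrt (t^2 - 4*q) with hr
    have hr0 : 0 ≤ r := Real.sqrt_nonneg _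
    have hr2 : r^2 = t^2 - 4*q := Real.sq_sqrt hD
    have hrlt : r < -t := by nlinarith
    refine ⟨((t+r)/2 : ℝ), ((t-r)/2 : ℝ), ?_, ?_, ?_, ?_, ?_, ?_⟩
    · have h : ((t+r)/2)^2 = t*((t+r)/2) - q := by nlinarith
      exact_mod_cast congrArg (Complex.ofReal) h
    · have h : ((t-r)/2)^2 = t*((t-r)/2) - q := by nlinarith
      exact_mod_cast congrArg (Complex.ofReal) h
    · push_cast; ring
    · have h : ((t+r)/2) * ((t-r)/2) = q := by nlinarith
      exact_mod_cast congrArg (Complex.ofReal) h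
    · simpa using by linarith
    · simpa using by linarith
  · set r := Real.sqrt (4*q - t^2) with hr
    have hr2 : r^2 = 4*q - t^2 := Real.sq_sqrt (by linarith)
    have hr2C : ((r:ℂ))^2 = 4*(q:ℂ) - (t:ℂ)^2 := by exact_mod_cast congrArg Complex.ofReal hr2
    refine ⟨(↑(t/2) + ↑(r/2) * Complex.I), (↑(t/2) - ↑(r/2) * Complex.I), ?_, ?_, ?_, ?_, ?_, ?_⟩
    · push_cast
      linear_combination ((r:ℂ)^2/4) * Complex.I_sq - (1/4) * hr2C
    · push_cast
      linear_combination ((r:ℂ)^2/4) * Complex.I_sq - (1/4) * hr2C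
    · push_cast; ring
    · push_cast
      linear_combination (-((r:ℂ)^2)/4) * Complex.I_sq + (1/4) * hr2C
    · simpa using by linarith
    · simpa using by linarith

lemma eigvec_c_aux (a b c d w s t q : ℝ) (J : Matrix (Fin 3) (Fin 3) ℝ)
    (h00 : J 0 0 = a) (h01 : J 0 1 = b) (h02 : J 0 2 = 0)
    (h10 : J 1 0 = c) (h11 : J 1 1 = d) (h12 : J 1 2 = w)
    (h20 : J 2 0 = 0) (h21 : J 2 1 = 0) (h22 : J 2 2 = s)
    (hT : t = a + d) (hQ : q = a*d - b*c) (hb : b ≠ 0)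
    (l : ℂ) (hl : l^2 = (t:ℂ)*l - (q:ℂ)) :
    ∃ v : Fin 3 → ℂ, v ≠ 0 ∧ (J.map (fun x => (x:ℂ))).mulVec v = l • v := by
  have htC : (t:ℂ) = (a:ℂ) + (d:ℂ) := by rw [hT]; push_cast; ring
  have hqC : (q:ℂ) = (a:ℂ)*(d:ℂ) - (b:ℂ)*(c:ℂ) := by rw [hQ]; push_cast; ring
  refine ⟨![(b:ℂ), l - (a:ℂ), 0], ?_, ?_⟩
  · intro h
    apply hb
    have h0 := congrFun h 0
    simpa [Complex.ofReal_eq_zero] using h0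
  · funext i
    fin_cases i <;>
      simp only [Matrix.map_apply, Matrix.mulVec, dotProduct,
        Fin.sum_univ_three, Fin.zero_eta, Fin.mk_one, Fin.reduceFinMk, Matrix.cons_val_zero,
        Matrix.cons_val_one, Matrix.head_cons, Matrix.cons_val_two, Matrix.tail_cons,
        Matrix.head_fin_const, Pi.smul_apply, smul_eq_mul, Fin.isValue, h00, h01, h02,
        h10, h11, h12, h20, h21, h22]
    · push_cast; ring
    · linear_combination (-1 : ℂ) * hl + (-l) * htC + hqC
    · push_cast; ring

lemma eigvec_r_aux (a b c d s X Δ : ℝ) (J : Matrix (Fin 3) (Fin 3) ℝ)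
    (h00 : J 0 0 = a) (h01 : J 0 1 = b) (h02 : J 0 2 = 0)
    (h10 : J 1 0 = c) (h11 : J 1 1 = d) (h12 : J 1 2 = -X)
    (h20 : J 2 0 = 0) (h21 : J 2 1 = 0) (h22 : J 2 2 = s)
    (hΔ : Δ = (a - s) * (d - s) - b*c) (hΔne : Δ ≠ 0) :
    ∃ v : Fin 3 → ℝ, v ≠ 0 ∧ J.mulVec v = s • v := by
  refine ⟨![-b*X, (a - s)*X, Δ], ?_, ?_⟩
  · intro h
    apply hΔne
    have h2 := congrFun h 2
    simpa using h2
  · funext i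
    fin_cases i <;>
      simp only [Matrix.mulVec, dotProduct,
        Fin.sum_univ_three, Fin.zero_eta, Fin.mk_one, Fin.reduceFinMk, Matrix.cons_val_zero,
        Matrix.cons_val_one, Matrix.head_cons, Matrix.cons_val_two, Matrix.tail_cons,
        Matrix.head_fin_const, Pi.smul_apply, smul_eq_mul, Fin.isValue, h00, h01, h02,
        h10, h11, h12, h20, h21, h22]
    · ring
    · linear_combination (-X) * hΔ
    · ring

set_option maxHeartbeats 1000000 in
/-- At the critical point `P₂`, the Jacobian of the phase-space vector field has
eigenvalues `λ₁, λ₂, λ₃` with `λ₁ + λ₂ < 0`, `λ₁ λ₂ > 0`,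
`λ₃ = σ(m-1)/(2(m+1)α) > 0`, and `λ₁, λ₂` have negative real part. -/
theorem jacobian_at_P2
    (m σ α β : ℝ) (hm : 1 < m) (hσ : 0 < σ)
    (hα : α = (σ + 2) / (σ * (m - 1))) (hβ : β = 1 / σ) :
    let comp : Fin 3 → (ℝ × ℝ × ℝ) → ℝ :=
      ![fun p => p.1 * ((m - 1) * p.2.1 - 2 * p.1),
        fun p => -p.2.1 ^ 2 - (β / α) * p.2.1 + p.1 - p.1 * p.2.1 - p.1 * p.2.2,
        fun p => σ * p.1 * p.2.2]
    let e : Fin 3 → ℝ × ℝ × ℝ := ![(1, 0, 0), (0, 1, 0), (0, 0, 1)]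
    let P : ℝ × ℝ × ℝ := ((m - 1) / (2 * (m + 1) * α), 1 / ((m + 1) * α), 0)
    let J : Matrix (Fin 3) (Fin 3) ℝ :=
      Matrix.of fun i j => deriv (fun s : ℝ => comp i (P + s • e j)) 0
    let Jc : Matrix (Fin 3) (Fin 3) ℂ := J.map (fun x => (x : ℂ))
    ∃ lam₁ lam₂ : ℂ,
      (∃ v : Fin 3 → ℂ, v ≠ 0 ∧ Jc.mulVec v = lam₁ • v) ∧
      (∃ v : Fin 3 → ℂ, v ≠ 0 ∧ Jc.mulVec v = lam₂ • v) ∧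
      lam₁ + lam₂ = ((-(3 * m + 1 + 2 * β * (m + 1)) / (2 * (m + 1) * α) : ℝ) : ℂ) ∧
      (-(3 * m + 1 + 2 * β * (m + 1)) / (2 * (m + 1) * α) : ℝ) < 0 ∧
      lam₁ * lam₂ = (((m - 1) / (2 * (m + 1) * α ^ 2) : ℝ) : ℂ) ∧
      (0 : ℝ) < (m - 1) / (2 * (m + 1) * α ^ 2) ∧
      lam₁.re < 0 ∧ lam₂.re < 0 ∧
      (∃ v : Fin 3 → ℝ, v ≠ 0 ∧
        J.mulVec v = (σ * (m - 1) / (2 * (m + 1) * α)) • v) ∧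
      0 < σ * (m - 1) / (2 * (m + 1) * α) := by
  have hm1 : (0:ℝ) < m - 1 := by linarith
  have hmp : (0:ℝ) < m + 1 := by linarith
  have hαpos : 0 < α := by rw [hα]; positivity
  have hβpos : 0 < β := by rw [hβ]; positivity
  set X := (m - 1) / (2 * (m + 1) * α) with hX
  set Y := 1 / ((m + 1) * α) with hY
  intro comp e P J Jc
  have hXpos : 0 < X := by rw [hX]; positivity
  have hYpos : 0 < Y := by rw [hY]; positivity
  have hαne : α ≠ 0 := ne_of_gt hαpos
  have key : α * (m - 1) = 1 + 2 * β := by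
    rw [hα, hβ]; field_simp
  -- Jacobian entries
  have h00 : J 0 0 = (m-1)*Y - 4*X :=
    deriv_quad_aux _ (-2) _ (X*((m-1)*Y-2*X)) (fun s => by simp [J, comp, P, e]; try ring)
  have h01 : J 0 1 = (m-1)*X :=
    deriv_quad_aux _ 0 _ (X*((m-1)*Y-2*X)) (fun s => by simp [J, comp, P, e]; try ring)
  have h02 : J 0 2 = 0 :=
    deriv_quad_aux _ 0 _ (X*((m-1)*Y-2*X)) (fun s => by simp [J, comp, P, e]; try ring)
  have h10 : J 1 0 = 1 - Y :=
    deriv_quad_aux _ 0 _ (-Y^2 - (β/α)*Y + X - X*Y) (fun s => by simp [J, comp, P, e]; try ring)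
  have h11 : J 1 1 = -2*Y - β/α - X :=
    deriv_quad_aux _ (-1) _ (-Y^2 - (β/α)*Y + X - X*Y) (fun s => by simp [J, comp, P, e]; try ring)
  have h12 : J 1 2 = -X :=
    deriv_quad_aux _ 0 _ (-Y^2 - (β/α)*Y + X - X*Y) (fun s => by simp [J, comp, P, e]; try ring)
  have h20 : J 2 0 = 0 :=
    deriv_quad_aux _ 0 _ 0 (fun s => by simp [J, comp, P, e]; try ring)
  have h21 : J 2 1 = 0 :=
    deriv_quad_aux _ 0 _ 0 (fun s => by simp [J, comp, P, e]; try ring)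
  have h22 : J 2 2 = σ*X :=
    deriv_quad_aux _ 0 _ 0 (fun s => by simp [J, comp, P, e]; try ring)
  -- trace and determinant of the upper-left 2x2 block
  set t : ℝ := ((m-1)*Y - 4*X) + (-2*Y - β/α - X) with hT
  set q : ℝ := ((m-1)*Y - 4*X) * (-2*Y - β/α - X) - ((m-1)*X) * (1 - Y) with hQ
  have ht : t = -(3*m + 1 + 2*β*(m+1)) / (2*(m+1)*α) := by
    rw [hT, hX, hY]; field_simp; ring
  have hq : q = (m-1) / (2*(m+1)*α^2) := by
    have hβ' : β = (α*(m-1)-1)/2 := by linarith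
    rw [hQ, hX, hY, hβ']; field_simp; ring
  have htneg : t < 0 := by
    rw [ht]
    apply div_neg_of_neg_of_pos
    · nlinarith
    · positivity
  have hqpos : 0 < q := by rw [hq]; positivity
  -- complex eigenvalues of the 2x2 block
  obtain ⟨l1, l2, e1, e2, hsum, hprod, hre1, hre2⟩ := quad_roots_aux t q htneg hqpos
  have hbne : ((m-1)*X : ℝ) ≠ 0 := by positivity
  -- real eigenvalue data
  have hL : σ * (m-1) / (2*(m+1)*α) = σ * X := by rw [hX]; ring
  have hΔeq : (((m-1)*Y - 4*X) - σ*X) * ((-2*Y - β/α - X) - σ*X) - ((m-1)*X)*(1 - Y)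
      = q - (σ*X)*t + (σ*X)^2 := by rw [hT, hQ]; ring
  have hΔpos : 0 < (((m-1)*Y - 4*X) - σ*X) * ((-2*Y - β/α - X) - σ*X) - ((m-1)*X)*(1 - Y) := by
    rw [hΔeq]
    nlinarith [mul_pos (mul_pos hσ hXpos) (neg_pos.mpr htneg), sq_nonneg (σ*X)]
  refine ⟨l1, l2,
    eigvec_c_aux _ _ _ _ _ _ _ _ J h00 h01 h02 h10 h11 h12 h20 h21 h22 hT hQ hbne l1 e1,
    eigvec_c_aux _ _ _ _ _ _ _ _ J h00 h01 h02 h10 h11 h12 h20 h21 h22 hT hQ hbne l2 e2,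
    ?_, ?_, ?_, ?_, hre1, hre2, ?_, ?_⟩
  · rw [hsum, ht]
  · rw [← ht]; exact htneg
  · rw [hprod, hq]
  · rw [← hq]; exact hqpos
  · rw [hL]
    exact eigvec_r_aux _ _ _ _ _ X _ J h00 h01 h02 h10 h11 h12 h20 h21 h22 rfl
      (ne_of_gt hΔpos)
  · rw [hL]; positivity
end

section
/- Let m > 1 and σ_* = √(2(m+1)), α_* = (σ_*+2)/(σ_*(m-1)), β_* = 1/σ_*. The line parametrized by X ↦ (X, -(m-1)/(σ_*+2) + ((σ_*+2)/(m-1))X, (mσ_*+m+1)/σ_* - ((mσ_*+m+1)(σ_*+2)/(m-1)²)X) is invariant for the vector field F(X,Y,Z) = (X((m-1)Y - 2X), -Y² - (β_*/α_*)Y + X - XY - XZ, σ_* XZ); i.e., at every point of the line, F is tangent to the line. -/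
/-- The explicit straight line in phase space carrying the explicit profile `f_*`
is invariant for the vector field at the critical exponent `σ_* = √(2(m+1))`. -/
theorem explicit_invariant_line
    (m σ α β : ℝ) (hm : 1 < m)
    (hσ : σ = Real.sqrt (2 * (m + 1)))
    (hα : α = (σ + 2) / (σ * (m - 1))) (hβ : β = 1 / σ) :
    let F : ℝ × ℝ × ℝ → ℝ × ℝ × ℝ := fun p =>
      (p.1 * ((m - 1) * p.2.1 - 2 * p.1),
       -p.2.1 ^ 2 - (β / α) * p.2.1 + p.1 - p.1 * p.2.1 - p.1 * p.2.2,
       σ * p.1 * p.2.2)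
    let L : ℝ → ℝ × ℝ × ℝ := fun X =>
      (X, -(m - 1) / (σ + 2) + ((σ + 2) / (m - 1)) * X,
       (m * σ + m + 1) / σ - ((m * σ + m + 1) * (σ + 2) / (m - 1) ^ 2) * X)
    let d : ℝ × ℝ × ℝ :=
      (1, (σ + 2) / (m - 1), -((m * σ + m + 1) * (σ + 2) / (m - 1) ^ 2))
    ∀ X : ℝ, F (L X) = (F (L X)).1 • d := by
  intro F L d X
  have hσpos : 0 < σ := by
    rw [hσ]; exact Real.sqrt_pos.mpr (by linarith)
  have hσ2 : σ ^ 2 = 2 * (m + 1) := by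
    rw [hσ, sq, Real.mul_self_sqrt (by linarith)]
  have hm1 : m - 1 ≠ 0 := by linarith
  have hσne : σ ≠ 0 := ne_of_gt hσpos
  have hσ2ne : σ + 2 ≠ 0 := by linarith
  have hβα : β / α = (m - 1) / (σ + 2) := by
    rw [hβ, hα]; field_simp
  simp only [F, L, d, Prod.smul_mk, smul_eq_mul, Prod.mk.injEq]
  refine ⟨?_, ?_, ?_⟩
  · ring
  · rw [hβα, ← sub_eq_zero]
    have h0 : σ ^ 2 - 2 * (m + 1) = 0 := by linarith [hσ2]
    calc _ = X / (σ * (σ + 2)) * (σ ^ 2 - 2 * (m + 1)) := by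
            field_simp
            ring
      _ = 0 := by rw [h0]; ring
  · field_simp
    ring
end

section
/- Let m > 1 and 0 < σ < 2, and set α = (σ+2)/(σ(m-1)), β = 1/σ, k₁ = (m-1)²/(4(σ+2)²). Along the surface {XZ = k₁} in the region {Y < 0, X > 0, Z > 0}, the vector field F(X,Y,Z) = (X((m-1)Y - 2X), -Y² - (β/α)Y + X - XY - XZ, σXZ) satisfies Z·F₁ + X·F₃ = XZ((m-1)Y + (σ-2)X) < 0; i.e., the quantity XZ is strictly decreasing along trajectories at such points. -/
/-- Barrier estimate on the surface `{XZ = k₁}` with `Y < 0`: the quantity `XZ`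
is strictly decreasing along trajectories there, for `0 < σ < 2`. -/
theorem barrier_XZ_decreasing
    (m σ α β k₁ : ℝ) (hm : 1 < m) (hσ0 : 0 < σ) (hσ2 : σ < 2)
    (hα : α = (σ + 2) / (σ * (m - 1))) (hβ : β = 1 / σ)
    (hk₁ : k₁ = (m - 1) ^ 2 / (4 * (σ + 2) ^ 2)) :
    ∀ X Y Z : ℝ, 0 < X → 0 < Z → Y < 0 → X * Z = k₁ →
      Z * (X * ((m - 1) * Y - 2 * X)) + X * (σ * X * Z)
          = X * Z * ((m - 1) * Y + (σ - 2) * X)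
        ∧ X * Z * ((m - 1) * Y + (σ - 2) * X) < 0 := by
  intro X Y Z hX hZ hY _
  refine ⟨by ring, ?_⟩
  have h1 : (m - 1) * Y + (σ - 2) * X < 0 := by nlinarith
  nlinarith [mul_pos hX hZ]
end

section
/- Let m > 1, σ > 0, α = (σ+2)/(σ(m-1)), β = 1/σ. On the plane {Y = -β/α}, the second component of the vector field F(X,Y,Z) = (X((m-1)Y - 2X), -Y² - (β/α)Y + X - XY - XZ, σXZ) equals X(1 + β/α - Z). Consequently, for X > 0 it is negative if and only if Z > 1 + β/α. Hence a trajectory with X > 0, Z nondecreasing, that crosses {Y = -β/α} from {Y > -β/α} must do so at a point with Z > 1 + β/α, and thereafter its second component at any return to the plane would be negative, so it can never re-enter {Y > -β/α}. -/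
open Set Filter Topology

lemma hda_fst3 {f : ℝ → ℝ × ℝ × ℝ} {v : ℝ × ℝ × ℝ} {t : ℝ}
    (h : HasDerivAt f v t) : HasDerivAt (fun t => (f t).1) v.1 t := by
  simpa using (h.hasFDerivAt.fst).hasDerivAt

lemma hda_snd1 {f : ℝ → ℝ × ℝ × ℝ} {v : ℝ × ℝ × ℝ} {t : ℝ}
    (h : HasDerivAt f v t) : HasDerivAt (fun t => (f t).2.1) v.2.1 t := by
  simpa using ((h.hasFDerivAt.snd).fst).hasDerivAt

lemma hda_snd2 {f : ℝ → ℝ × ℝ × ℝ} {v : ℝ × ℝ × ℝ} {t : ℝ}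
    (h : HasDerivAt f v t) : HasDerivAt (fun t => (f t).2.2) v.2.2 t := by
  simpa using ((h.hasFDerivAt.snd).snd).hasDerivAt

-- first crossing
lemma first_cross {g : ℝ → ℝ} {t₀ t₁ c : ℝ} (hg : Continuous g) (h01 : t₀ < t₁)
    (h0 : c < g t₀) (h1 : g t₁ < c) :
    ∃ s ∈ Set.Ioc t₀ t₁, g s = c ∧ ∀ t ∈ Set.Ico t₀ s, c < g t := by
  set S : Set ℝ := {t ∈ Set.Icc t₀ t₁ | g t = c} with hS
  have hne : S.Nonempty := by
    have : c ∈ Set.Icc (g t₁) (g t₀) := ⟨h1.le, h0.le⟩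
    obtain ⟨u, hu, hgu⟩ := intermediate_value_Icc' h01.le hg.continuousOn this
    exact ⟨u, hu, hgu⟩
  have hcl : IsClosed S := (isClosed_Icc.inter (isClosed_eq hg continuous_const))
  have hbdd : BddBelow S := ⟨t₀, fun x hx => hx.1.1⟩
  set s := sInf S with hs
  have hsS : s ∈ S := hcl.csInf_mem hne hbdd
  have hst0 : t₀ < s := by
    rcases lt_or_eq_of_le hsS.1.1 with h | h
    · exact h
    · exact absurd hsS.2 (by rw [← h]; exact ne_of_gt h0)
  refine ⟨s, ⟨hst0, hsS.1.2⟩, hsS.2, ?_⟩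
  intro t ht
  by_contra hle
  push_neg at hle
  rcases lt_or_eq_of_le hle with hlt | heq
  · obtain ⟨u, hu, hgu⟩ := intermediate_value_Icc' ht.1 hg.continuousOn ⟨hlt.le, h0.le⟩
    have : u ∈ S := ⟨⟨hu.1, hu.2.trans (ht.2.le.trans hsS.1.2)⟩, hgu⟩
    exact absurd (csInf_le hbdd this) (not_le.2 (lt_of_le_of_lt hu.2 ht.2))
  · have : t ∈ S := ⟨⟨ht.1, ht.2.le.trans hsS.1.2⟩, heq⟩
    exact absurd (csInf_le hbdd this) (not_le.2 ht.2)

-- last crossing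
lemma last_cross {g : ℝ → ℝ} {t₁ t c : ℝ} (hg : Continuous g) (h01 : t₁ < t)
    (h0 : g t₁ < c) (h1 : c < g t) :
    ∃ s ∈ Set.Ico t₁ t, g s = c ∧ ∀ u ∈ Set.Ioc s t, c < g u := by
  set S : Set ℝ := {u ∈ Set.Icc t₁ t | g u = c} with hS
  have hne : S.Nonempty := by
    obtain ⟨u, hu, hgu⟩ := intermediate_value_Icc h01.le hg.continuousOn ⟨h0.le, h1.le⟩
    exact ⟨u, hu, hgu⟩
  have hcl : IsClosed S := (isClosed_Icc.inter (isClosed_eq hg continuous_const))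
  have hbdd : BddAbove S := ⟨t, fun x hx => hx.1.2⟩
  set s := sSup S with hs
  have hsS : s ∈ S := hcl.csSup_mem hne hbdd
  have hst : s < t := by
    rcases lt_or_eq_of_le hsS.1.2 with h | h
    · exact h
    · exact absurd hsS.2 (by rw [h]; exact h1.ne')
  refine ⟨s, ⟨hsS.1.1, hst⟩, hsS.2, ?_⟩
  intro u hu
  by_contra hle
  push_neg at hle
  rcases lt_or_eq_of_le hle with hlt | heq
  · obtain ⟨v, hv, hgv⟩ := intermediate_value_Icc hu.2 hg.continuousOn ⟨hlt.le, h1.le⟩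
    have : v ∈ S := ⟨⟨(hsS.1.1.trans hu.1.le).trans hv.1, hv.2⟩, hgv⟩
    exact absurd (le_csSup hbdd this) (not_le.2 (lt_of_lt_of_le hu.1 hv.1))
  · have : u ∈ S := ⟨⟨hsS.1.1.trans hu.1.le, hu.2⟩, heq⟩
    exact absurd (le_csSup hbdd this) (not_le.2 hu.1)

-- derivative sign at a left-sided min
lemma deriv_nonpos_of_gt_left {g : ℝ → ℝ} {d s a : ℝ} (hd : HasDerivAt g d s)
    (ha : a < s) (hmin : ∀ t ∈ Set.Ico a s, g s < g t) : d ≤ 0 := by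
  have hslope := hasDerivAt_iff_tendsto_slope.1 hd
  have h2 : Tendsto (slope g s) (𝓝[<] s) (𝓝 d) :=
    hslope.mono_left (nhdsWithin_mono _ (fun x hx => ne_of_lt hx))
  refine le_of_tendsto h2 ?_
  filter_upwards [Ioo_mem_nhdsLT ha] with t ht
  have h1 : g s < g t := hmin t ⟨ht.1.le, ht.2⟩
  have h3 : t - s < 0 := sub_neg.2 ht.2
  rw [slope_def_field]
  apply div_nonpos_of_nonneg_of_nonpos <;> linarith

lemma deriv_nonneg_of_gt_right {g : ℝ → ℝ} {d s b : ℝ} (hd : HasDerivAt g d s)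
    (hb : s < b) (hmin : ∀ t ∈ Set.Ioc s b, g s < g t) : 0 ≤ d := by
  have hslope := hasDerivAt_iff_tendsto_slope.1 hd
  have h2 : Tendsto (slope g s) (𝓝[>] s) (𝓝 d) :=
    hslope.mono_left (nhdsWithin_mono _ (fun x hx => ne_of_gt hx))
  refine ge_of_tendsto h2 ?_
  filter_upwards [Ioo_mem_nhdsGT hb] with t ht
  have h1 : g s < g t := hmin t ⟨ht.1, ht.2.le⟩
  have h3 : 0 < t - s := sub_pos.2 ht.1
  rw [slope_def_field]
  apply div_nonneg <;> linarith

lemma no_flat_touch {g D : ℝ → ℝ} {s a d : ℝ}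
    (hg : ∀ t, HasDerivAt g (D t) t) (hd : HasDerivAt D d s) (hdneg : d < 0)
    (hDs : D s = 0) (ha : a < s) (hgt : ∀ t ∈ Set.Ico a s, g s < g t) : False := by
  have hslope := hasDerivAt_iff_tendsto_slope.1 hd
  have h2 : Tendsto (slope D s) (𝓝[<] s) (𝓝 d) :=
    hslope.mono_left (nhdsWithin_mono _ (fun x hx => ne_of_lt hx))
  have hev : ∀ᶠ t in 𝓝[<] s, slope D s t < d / 2 :=
    h2.eventually_lt_const (by linarith)
  have hev2 : ∀ᶠ t in 𝓝[<] s, t ∈ Set.Ioo a s ∧ slope D s t < d / 2 := by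
    filter_upwards [Ioo_mem_nhdsLT ha, hev] with t h1 h2 using ⟨h1, h2⟩
  obtain ⟨l, hl, hsub⟩ := mem_nhdsLT_iff_exists_Ioo_subset.1 hev2
  have hDpos : ∀ t ∈ Set.Ioo l s, 0 < D t := by
    intro t ht
    obtain ⟨ht1, ht2⟩ := hsub ht
    have hts : t - s < 0 := sub_neg.2 ht.2
    have : (D t - D s) / (t - s) < d / 2 := by
      have := ht2; rwa [slope_def_field] at this
    rw [hDs, sub_zero, div_lt_iff_of_neg hts] at this
    nlinarith
  set x := (max l a + s) / 2 with hx
  have hlx : max l a < x := by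
    have : max l a < s := max_lt (Set.mem_Iio.1 hl) ha
    simp only [hx]; linarith
  have hxs : x < s := by
    have : max l a < s := max_lt (Set.mem_Iio.1 hl) ha
    simp only [hx]; linarith
  have hmono : StrictMonoOn g (Set.Icc x s) := by
    apply strictMonoOn_of_deriv_pos (convex_Icc x s)
    · exact (fun t _ => (hg t).differentiableAt.continuousAt.continuousWithinAt)
    · intro t ht
      rw [interior_Icc] at ht
      rw [(hg t).deriv]
      exact hDpos t ⟨lt_of_le_of_lt (le_max_left l a) (hlx.trans ht.1), ht.2⟩
  have h1 : g x < g s := hmono ⟨le_refl x, hxs.le⟩ ⟨hxs.le, le_refl s⟩ hxs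
  have h2 : g s < g x := hgt x ⟨(le_max_right l a).trans hlx.le, hxs⟩
  linarith

/-- Trapping lemma at the plane `{Y = -β/α}`: the flow there equals
`X(1 + β/α - Z)`, is negative (for `X > 0`) iff `Z > 1 + β/α`, and once a
trajectory with `X > 0` and nondecreasing `Z` crosses the plane downwards it
never re-enters the half-space `{Y > -β/α}`. -/
theorem trapping_plane_Y_eq_neg_beta_alpha
    (m σ α β : ℝ) (hm : 1 < m) (hσ : 0 < σ)
    (hα : α = (σ + 2) / (σ * (m - 1))) (hβ : β = 1 / σ) :
    let F : ℝ × ℝ × ℝ → ℝ × ℝ × ℝ := fun p =>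
      (p.1 * ((m - 1) * p.2.1 - 2 * p.1),
       -p.2.1 ^ 2 - (β / α) * p.2.1 + p.1 - p.1 * p.2.1 - p.1 * p.2.2,
       σ * p.1 * p.2.2)
    (∀ X Z : ℝ, (F (X, -β / α, Z)).2.1 = X * (1 + β / α - Z)) ∧
    (∀ X Z : ℝ, 0 < X → ((F (X, -β / α, Z)).2.1 < 0 ↔ 1 + β / α < Z)) ∧
    (∀ sol : ℝ → ℝ × ℝ × ℝ,
      (∀ t : ℝ, HasDerivAt sol (F (sol t)) t) →
      (∀ t : ℝ, 0 < (sol t).1) →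
      Monotone (fun t => (sol t).2.2) →
      ∀ t₀ t₁ : ℝ, t₀ < t₁ →
        -β / α < (sol t₀).2.1 → (sol t₁).2.1 < -β / α →
        (∃ s ∈ Set.Icc t₀ t₁,
          (sol s).2.1 = -β / α ∧ 1 + β / α < (sol s).2.2) ∧
        (∀ t : ℝ, t₁ ≤ t → (sol t).2.1 ≤ -β / α)) := by
  intro F
  have hba : 0 < β / α := by
    rw [hα, hβ]
    have h1 : 0 < σ * (m - 1) := by nlinarith
    have h2 : 0 < (σ + 2) / (σ * (m - 1)) := div_pos (by linarith) h1
    exact div_pos (by positivity) h2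
  have hF1 : ∀ p : ℝ × ℝ × ℝ, (F p).1 = p.1 * ((m - 1) * p.2.1 - 2 * p.1) := fun p => rfl
  have hF21 : ∀ p : ℝ × ℝ × ℝ,
      (F p).2.1 = -p.2.1 ^ 2 - (β / α) * p.2.1 + p.1 - p.1 * p.2.1 - p.1 * p.2.2 :=
    fun p => rfl
  have hF22 : ∀ p : ℝ × ℝ × ℝ, (F p).2.2 = σ * p.1 * p.2.2 := fun p => rfl
  refine ⟨?_, ?_, ?_⟩
  · intro X Z
    rw [hF21]; ring
  · intro X Z hX
    rw [hF21]
    have h1 : -(-β / α) ^ 2 - β / α * (-β / α) + X - X * (-β / α) - X * Z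
        = X * (1 + β / α - Z) := by ring
    rw [h1]
    constructor
    · intro h; nlinarith
    · intro h; nlinarith
  · intro sol hsol hX hZmono t₀ t₁ h01 hY0 hY1
    set Y : ℝ → ℝ := fun t => (sol t).2.1 with hYdef
    set Xf : ℝ → ℝ := fun t => (sol t).1 with hXdef
    set Zf : ℝ → ℝ := fun t => (sol t).2.2 with hZdef
    set D : ℝ → ℝ := fun t =>
      -(Y t) ^ 2 - (β / α) * (Y t) + Xf t - Xf t * Y t - Xf t * Zf t with hDdef
    have hYd : ∀ t, HasDerivAt Y (D t) t := fun t => by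
      have h := hda_snd1 (hsol t); rw [hF21] at h; exact h
    have hXd : ∀ t, HasDerivAt Xf (Xf t * ((m - 1) * Y t - 2 * Xf t)) t :=
      fun t => (hF1 (sol t)) ▸ hda_fst3 (hsol t)
    have hZd : ∀ t, HasDerivAt Zf (σ * Xf t * Zf t) t :=
      fun t => (hF22 (sol t)) ▸ hda_snd2 (hsol t)
    have hYc : Continuous Y :=
      continuous_iff_continuousAt.2 fun t => (hYd t).continuousAt
    obtain ⟨s₀, hs₀, hYs₀, hbefore⟩ := first_cross hYc h01 hY0 hY1
    have hD0 : D s₀ ≤ 0 :=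
      deriv_nonpos_of_gt_left (hYd s₀) hs₀.1
        (fun t ht => by rw [hYs₀]; exact hbefore t ht)
    have hDeq : D s₀ = Xf s₀ * (1 + β / α - Zf s₀) := by
      simp only [hDdef, hYs₀]; ring
    have hxs₀ : 0 < Xf s₀ := hX s₀
    have hZge : 1 + β / α ≤ Zf s₀ := by
      by_contra hcon
      push_neg at hcon
      have hpos : 0 < Xf s₀ * (1 + β / α - Zf s₀) :=
        mul_pos hxs₀ (by linarith)
      rw [← hDeq] at hpos
      linarith
    have hZgt : 1 + β / α < Zf s₀ := by
      rcases lt_or_eq_of_le hZge with h | h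
      · exact h
      exfalso
      have hDs0 : D s₀ = 0 := by rw [hDeq, ← h]; ring
      have hd0 := (((((hYd s₀).pow 2).neg.sub ((hYd s₀).const_mul (β / α))).add
        (hXd s₀)).sub ((hXd s₀).mul (hYd s₀))).sub ((hXd s₀).mul (hZd s₀))
      have hd2 : HasDerivAt D (-(σ * Xf s₀ ^ 2 * Zf s₀)) s₀ := by
        rw [hDdef]
        convert hd0 using 1
        · rfl
        · rfl
        · rfl
        rw [hDs0, hYs₀, ← h]
        ring
      have hneg : -(σ * Xf s₀ ^ 2 * Zf s₀) < 0 := by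
        have hz : 0 < Zf s₀ := by rw [← h]; linarith
        have hp : 0 < σ * Xf s₀ ^ 2 * Zf s₀ :=
          mul_pos (mul_pos hσ (pow_pos hxs₀ 2)) hz
        linarith
      exact no_flat_touch hYd hd2 hneg hDs0 hs₀.1
        (fun t ht => by rw [hYs₀]; exact hbefore t ht)
    refine ⟨⟨s₀, ⟨hs₀.1.le, hs₀.2⟩, hYs₀, hZgt⟩, ?_⟩
    intro t ht
    by_contra hlt
    push_neg at hlt
    have ht1 : t₁ < t := by
      rcases lt_or_eq_of_le ht with h | h
      · exact h
      · exfalso; rw [← h] at hlt; exact absurd hY1 (not_lt.2 hlt.le)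
    obtain ⟨s₂, hs₂, hYs₂, hafter⟩ := last_cross hYc ht1 hY1 hlt
    have hD2 : 0 ≤ D s₂ :=
      deriv_nonneg_of_gt_right (hYd s₂) hs₂.2
        (fun u hu => by rw [hYs₂]; exact hafter u hu)
    have hDeq2 : D s₂ = Xf s₂ * (1 + β / α - Zf s₂) := by
      simp only [hDdef, hYs₂]; ring
    have hxs₂ : 0 < Xf s₂ := hX s₂
    have hZle : Zf s₂ ≤ 1 + β / α := by
      by_contra hcon
      push_neg at hcon
      have hneg : Xf s₂ * (1 + β / α - Zf s₂) < 0 :=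
        mul_neg_of_pos_of_neg hxs₂ (by linarith)
      rw [← hDeq2] at hneg
      linarith
    have hmon : Zf s₀ ≤ Zf s₂ := hZmono (hs₀.2.trans hs₂.1)
    linarith
end

section
/- Let m > 1, σ > 0, α = (σ+2)/(σ(m-1)), β = 1/σ. On the plane {Y = 0}, the second component of the vector field F(X,Y,Z) = (X((m-1)Y - 2X), -Y² - (β/α)Y + X - XY - XZ, σXZ) equals X(1 - Z). Therefore, for a trajectory with X > 0 and Z nondecreasing: if the trajectory crosses {Y = 0} from {Y > 0} to {Y < 0} at a point, then Z > 1 at that point, and the trajectory can never return to the half-space {Y > 0}. -/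
open Set Filter Topology

private lemma sign_lr {f : ℝ → ℝ} {d r : ℝ} (hf : HasDerivAt f d r)
    (h0 : f r = 0) (hd : 0 < d) :
    (∀ᶠ t in 𝓝[>] r, 0 < f t) ∧ (∀ᶠ t in 𝓝[<] r, f t < 0) := by
  have hs := hasDerivAt_iff_tendsto_slope.mp hf
  constructor
  · have h1 : Tendsto (slope f r) (𝓝[>] r) (𝓝 d) :=
      hs.mono_left (nhdsWithin_mono r (fun x hx => ne_of_gt hx))
    have h2 := h1.eventually (eventually_gt_nhds hd)
    filter_upwards [h2, self_mem_nhdsWithin] with t ht hrt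
    have hne : t - r ≠ 0 := sub_ne_zero.mpr (ne_of_gt hrt)
    have := mul_pos ht (sub_pos.mpr (hrt : r < t))
    rw [slope_def_field, h0, sub_zero, div_mul_cancel₀ _ hne] at this
    exact this
  · have h1 : Tendsto (slope f r) (𝓝[<] r) (𝓝 d) :=
      hs.mono_left (nhdsWithin_mono r (fun x hx => ne_of_lt hx))
    have h2 := h1.eventually (eventually_gt_nhds hd)
    filter_upwards [h2, self_mem_nhdsWithin] with t ht hrt
    have hne : t - r ≠ 0 := sub_ne_zero.mpr (ne_of_lt hrt)
    have := mul_neg_of_pos_of_neg ht (sub_neg.mpr (hrt : t < r))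
    rw [slope_def_field, h0, sub_zero, div_mul_cancel₀ _ hne] at this
    exact this

private lemma sign_lr_neg {f : ℝ → ℝ} {d r : ℝ} (hf : HasDerivAt f d r)
    (h0 : f r = 0) (hd : d < 0) :
    (∀ᶠ t in 𝓝[>] r, f t < 0) ∧ (∀ᶠ t in 𝓝[<] r, 0 < f t) := by
  have h := sign_lr hf.neg (by simp [h0]) (by linarith)
  exact ⟨h.1.mono (fun t ht => by simpa using ht),
         h.2.mono (fun t ht => by simpa using ht)⟩

private lemma last_zero {f : ℝ → ℝ} (hf : Continuous f) {p u : ℝ} (hpu : p < u)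
    (hp : 0 ≤ f p) (hu : f u < 0) :
    ∃ r ∈ Set.Ico p u, f r = 0 ∧ ∀ t ∈ Set.Ioc r u, f t < 0 := by
  set S : Set ℝ := Set.Icc p u ∩ {t | 0 ≤ f t} with hS
  have hSc : IsClosed S := isClosed_Icc.inter (isClosed_le continuous_const hf)
  have hSne : S.Nonempty := ⟨p, ⟨le_rfl, hpu.le⟩, hp⟩
  have hSbdd : BddAbove S := ⟨u, fun t ht => ht.1.2⟩
  set r := sSup S with hr
  have hrS : r ∈ S := hSc.csSup_mem hSne hSbdd
  have hru : r < u := lt_of_le_of_ne hrS.1.2 (fun h => by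
    have := hrS.2; rw [h] at this; exact absurd hu (not_lt.mpr this))
  have hneg : ∀ t ∈ Set.Ioc r u, f t < 0 := by
    intro t ht
    by_contra hle
    push_neg at hle
    have htS : t ∈ S := ⟨⟨hrS.1.1.trans ht.1.le, ht.2⟩, hle⟩
    exact absurd (le_csSup hSbdd htS) (not_le.mpr ht.1)
  have hle0 : f r ≤ 0 := by
    have htend : Tendsto f (𝓝[>] r) (𝓝 (f r)) :=
      (hf.continuousAt.tendsto).mono_left nhdsWithin_le_nhds
    refine le_of_tendsto htend ?_
    filter_upwards [Ioc_mem_nhdsGT_of_mem ⟨le_rfl, hru⟩] with t ht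
    exact (hneg t ht).le
  exact ⟨r, ⟨hrS.1.1, hru⟩, le_antisymm hle0 hrS.2, hneg⟩

private lemma first_zero {f : ℝ → ℝ} (hf : Continuous f) {p u : ℝ} (hpu : p < u)
    (hp : f p < 0) (hu : 0 ≤ f u) :
    ∃ r ∈ Set.Ioc p u, f r = 0 ∧ ∀ t ∈ Set.Ico p r, f t < 0 := by
  have hg : Continuous (fun t => f (p + u - t)) :=
    hf.comp ((continuous_const.sub continuous_id))
  obtain ⟨r', hr', h0, hneg⟩ := last_zero hg hpu (by simpa using hu) (by simpa using hp)
  refine ⟨p + u - r', ⟨by linarith [hr'.2], by linarith [hr'.1]⟩, by simpa using h0, ?_⟩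
  intro t ht
  have : p + u - t ∈ Set.Ioc r' u := ⟨by simp only [Set.mem_Ico] at ht; linarith [ht.2],
    by simp only [Set.mem_Ico] at ht; linarith [ht.1]⟩
  simpa using hneg _ this

/-- At the plane `{Y = 0}` the flow equals `X(1 - Z)`; a trajectory with `X > 0`
and nondecreasing `Z` crossing from `{Y > 0}` to `{Y < 0}` does so at a point
with `Z > 1` and can never return to `{Y > 0}`. -/
theorem trapping_plane_Y_eq_zero
    (m σ α β : ℝ) (hm : 1 < m) (hσ : 0 < σ)
    (hα : α = (σ + 2) / (σ * (m - 1))) (hβ : β = 1 / σ) :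
    let F : ℝ × ℝ × ℝ → ℝ × ℝ × ℝ := fun p =>
      (p.1 * ((m - 1) * p.2.1 - 2 * p.1),
       -p.2.1 ^ 2 - (β / α) * p.2.1 + p.1 - p.1 * p.2.1 - p.1 * p.2.2,
       σ * p.1 * p.2.2)
    (∀ X Z : ℝ, (F (X, 0, Z)).2.1 = X * (1 - Z)) ∧
    (∀ sol : ℝ → ℝ × ℝ × ℝ,
      (∀ t : ℝ, HasDerivAt sol (F (sol t)) t) →
      (∀ t : ℝ, 0 < (sol t).1) →
      Monotone (fun t => (sol t).2.2) →
      ∀ t₀ s t₁ : ℝ, t₀ < s → s < t₁ →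
        0 < (sol t₀).2.1 → (sol s).2.1 = 0 → (sol t₁).2.1 < 0 →
        1 < (sol s).2.2 ∧ (∀ t : ℝ, t₁ ≤ t → (sol t).2.1 ≤ 0)) := by
  intro F
  have hF : F = fun p : ℝ × ℝ × ℝ =>
      (p.1 * ((m - 1) * p.2.1 - 2 * p.1),
       -p.2.1 ^ 2 - (β / α) * p.2.1 + p.1 - p.1 * p.2.1 - p.1 * p.2.2,
       σ * p.1 * p.2.2) := rfl
  constructor
  · intro X Z
    simp only [hF]
    ring
  intro sol hsol hX hZmono t₀ s t₁ h01 h12 hY0 hYs hY1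
  -- component derivatives
  have hXd : ∀ t, HasDerivAt (fun t => (sol t).1) ((F (sol t)).1) t := fun t =>
    (hasFDerivAt_fst (𝕜 := ℝ) (E := ℝ) (F := ℝ × ℝ)).comp_hasDerivAt t (hsol t)
  have hYd : ∀ t, HasDerivAt (fun t => (sol t).2.1) ((F (sol t)).2.1) t := fun t =>
    (hasFDerivAt_fst (𝕜 := ℝ) (E := ℝ) (F := ℝ)).comp_hasDerivAt t
      ((hasFDerivAt_snd (𝕜 := ℝ) (E := ℝ) (F := ℝ × ℝ)).comp_hasDerivAt t (hsol t))
  have hZd : ∀ t, HasDerivAt (fun t => (sol t).2.2) ((F (sol t)).2.2) t := fun t =>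
    (hasFDerivAt_snd (𝕜 := ℝ) (E := ℝ) (F := ℝ)).comp_hasDerivAt t
      ((hasFDerivAt_snd (𝕜 := ℝ) (E := ℝ) (F := ℝ × ℝ)).comp_hasDerivAt t (hsol t))
  have hYc : Continuous (fun t => (sol t).2.1) :=
    continuous_iff_continuousAt.mpr fun t => (hYd t).continuousAt
  -- derivative of Y at a zero of Y
  have hYzero : ∀ r, (sol r).2.1 = 0 →
      HasDerivAt (fun t => (sol t).2.1) ((sol r).1 * (1 - (sol r).2.2)) r := by
    intro r h0
    have h := hYd r
    have he : (F (sol r)).2.1 = (sol r).1 * (1 - (sol r).2.2) := by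
      simp only [hF, h0]; ring
    rwa [he] at h
  -- Z cannot take the value 1 at two distinct times
  have hZne : ∀ a b : ℝ, a < b → (sol a).2.2 = 1 → (sol b).2.2 = 1 → False := by
    intro a b hab ha hb
    have hconst : ∀ t, a ≤ t → t ≤ b → (sol t).2.2 = 1 := fun t h1 h2 =>
      le_antisymm (hb ▸ hZmono h2) (ha ▸ hZmono h1)
    set c := (a + b) / 2 with hc
    have hac : a < c := by simp only [hc]; linarith
    have hcb : c < b := by simp only [hc]; linarith
    have heqev : (fun t => (sol t).2.2) =ᶠ[𝓝 c] fun _ => (1 : ℝ) := by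
      filter_upwards [Ioo_mem_nhds hac hcb] with t ht
      exact hconst t ht.1.le ht.2.le
    have h1 : HasDerivAt (fun t => (sol t).2.2) 0 c :=
      (hasDerivAt_const c (1 : ℝ)).congr_of_eventuallyEq heqev
    have h2 := (h1.unique (hZd c))
    have hZc : (sol c).2.2 = 1 := hconst c hac.le hcb.le
    simp only [hF, hZc, mul_one] at h2
    nlinarith [hX c]
  -- Claim 1 : Z(s) > 1
  have hZs : 1 < (sol s).2.2 := by
    by_contra hle
    push_neg at hle
    have hZlt : ∀ t, t < s → (sol t).2.2 < 1 := by
      intro t ht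
      rcases lt_or_eq_of_le ((hZmono ht.le).trans hle) with h | h
      · exact h
      · exact absurd (hZne t s ht h (le_antisymm hle (h ▸ hZmono ht.le))) not_false
    -- no down-crossing before s
    have hdown : ∀ u, t₀ < u → u ≤ s → (sol u).2.1 < 0 → False := by
      intro u hu1 hu2 hYu
      obtain ⟨r, hrm, hr0, hrneg⟩ := last_zero hYc hu1 hY0.le hYu
      have hZr : (sol r).2.2 < 1 := hZlt r (lt_of_lt_of_le hrm.2 hu2)
      have hd : 0 < (sol r).1 * (1 - (sol r).2.2) := mul_pos (hX r) (by linarith)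
      have hev := (sign_lr (hYzero r hr0) hr0 hd).1
      have hm : Set.Ioc r u ∈ 𝓝[>] r := Ioc_mem_nhdsGT_of_mem ⟨le_rfl, hrm.2⟩
      obtain ⟨t, ht1, ht2⟩ := (hev.and (eventually_of_mem hm (fun x hx => hx))).exists
      linarith [hrneg t ht2]
    rcases lt_or_eq_of_le hle with hlt | heq
    · -- Z(s) < 1 : Y' (s) > 0 forces Y < 0 just before s
      have hd : 0 < (sol s).1 * (1 - (sol s).2.2) := mul_pos (hX s) (by linarith)
      have hev := (sign_lr (hYzero s hYs) hYs hd).2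
      have hm : Set.Ioo t₀ s ∈ 𝓝[<] s := Ioo_mem_nhdsLT_of_mem ⟨h01, le_rfl⟩
      obtain ⟨u, hu1, hu2⟩ := (hev.and (eventually_of_mem hm (fun x hx => hx))).exists
      exact hdown u hu2.1 hu2.2.le hu1
    · -- Z(s) = 1
      have hYpos : ∀ t, t₀ ≤ t → t < s → 0 < (sol t).2.1 := by
        intro t ht0 hts
        rcases lt_trichotomy ((sol t).2.1) 0 with h | h | h
        · rcases eq_or_lt_of_le ht0 with h' | h'
          · exfalso; rw [← h'] at h; linarith
          · exact absurd (hdown t h' hts.le h) not_false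
        · -- Y t = 0 with Z t < 1 : Y < 0 just before t, then hdown
          have ht0' : t₀ < t := by
            rcases eq_or_lt_of_le ht0 with h' | h'
            · exfalso; rw [← h'] at h; linarith
            · exact h'
          have hd : 0 < (sol t).1 * (1 - (sol t).2.2) :=
            mul_pos (hX t) (by linarith [hZlt t hts])
          have hev := (sign_lr (hYzero t h) h hd).2
          have hm : Set.Ioo t₀ t ∈ 𝓝[<] t := Ioo_mem_nhdsLT_of_mem ⟨ht0', le_rfl⟩
          obtain ⟨u, hu1, hu2⟩ := (hev.and (eventually_of_mem hm (fun x hx => hx))).exists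
          exact absurd (hdown u hu2.1 (le_of_lt (lt_trans hu2.2 hts)) hu1) not_false
        · exact h
      -- second derivative of Y at s is -σ X² < 0, so Y' > 0 just before s
      have hYd' : ∀ t, HasDerivAt (fun t => (sol t).2.1)
          (-(sol t).2.1 ^ 2 - (β / α) * (sol t).2.1 + (sol t).1 - (sol t).1 * (sol t).2.1
            - (sol t).1 * (sol t).2.2) t := by
        intro t
        have h := hYd t
        simpa only [hF] using h
      have hXd' : ∀ t, HasDerivAt (fun t => (sol t).1)
          ((sol t).1 * ((m - 1) * (sol t).2.1 - 2 * (sol t).1)) t := by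
        intro t; have h := hXd t; simpa only [hF] using h
      have hZd' : ∀ t, HasDerivAt (fun t => (sol t).2.2)
          (σ * (sol t).1 * (sol t).2.2) t := by
        intro t; have h := hZd t; simpa only [hF] using h
      have hg : HasDerivAt (fun t => -(sol t).2.1 ^ 2 - (β / α) * (sol t).2.1 + (sol t).1
          - (sol t).1 * (sol t).2.1 - (sol t).1 * (sol t).2.2)
          (-(σ * (sol s).1 ^ 2)) s := by
        have hY := hYd' s
        have hXs' := hXd' s
        have hZs' := hZd' s
        have hcomb := ((((hY.pow 2).neg.sub (hY.const_mul (β / α))).add hXs').sub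
          (hXs'.mul hY)).sub (hXs'.mul hZs')
        have hYs' : -(sol s).2.1 ^ 2 - (β / α) * (sol s).2.1 + (sol s).1
            - (sol s).1 * (sol s).2.1 - (sol s).1 * (sol s).2.2 = 0 := by
          rw [hYs, heq]; ring
        refine hcomb.congr_deriv ?_
        rw [hYs', hYs, heq]
        ring
      have hg0 : -(sol s).2.1 ^ 2 - (β / α) * (sol s).2.1 + (sol s).1
          - (sol s).1 * (sol s).2.1 - (sol s).1 * (sol s).2.2 = 0 := by
        rw [hYs, heq]; ring
      have hDneg : -(σ * (sol s).1 ^ 2) < 0 := by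
        have : 0 < σ * (sol s).1 ^ 2 := mul_pos hσ (pow_pos (hX s) 2)
        linarith
      have hev := (sign_lr_neg hg hg0 hDneg).2
      obtain ⟨l, hl, hsub⟩ := mem_nhdsLT_iff_exists_Ioo_subset.mp
        (Filter.eventually_iff.mp hev)
      have hl' : l < s := hl
      have hmax : max t₀ l < s := max_lt h01 hl'
      set t := (max t₀ l + s) / 2 with htdef
      have ht1 : max t₀ l < t := by simp only [htdef]; linarith
      have ht2 : t < s := by simp only [htdef]; linarith
      have ht0 : t₀ < t := lt_of_le_of_lt (le_max_left _ _) ht1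
      have hlt' : l < t := lt_of_le_of_lt (le_max_right _ _) ht1
      obtain ⟨c, hc, hceq⟩ := exists_hasDerivAt_eq_slope (fun t => (sol t).2.1)
        (fun t => -(sol t).2.1 ^ 2 - (β / α) * (sol t).2.1 + (sol t).1
          - (sol t).1 * (sol t).2.1 - (sol t).1 * (sol t).2.2) ht2
        hYc.continuousOn (fun c _ => hYd' c)
      have hcpos : 0 < -(sol c).2.1 ^ 2 - (β / α) * (sol c).2.1 + (sol c).1
          - (sol c).1 * (sol c).2.1 - (sol c).1 * (sol c).2.2 :=
        hsub ⟨lt_trans hlt' hc.1, hc.2⟩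
      rw [hceq, hYs] at hcpos
      have hst : (0 : ℝ) < s - t := by linarith
      have := mul_pos hcpos hst
      rw [div_mul_cancel₀ _ (ne_of_gt hst)] at this
      have hYt := hYpos t ht0.le ht2
      linarith
  refine ⟨hZs, ?_⟩
  intro t ht
  by_contra hpos
  push_neg at hpos
  have ht1 : t₁ < t := by
    rcases eq_or_lt_of_le ht with h | h
    · exfalso; rw [← h] at hpos; linarith
    · exact h
  obtain ⟨r, hrm, hr0, hneg⟩ := first_zero hYc ht1 hY1 hpos.le
  have hZr : 1 < (sol r).2.2 :=
    lt_of_lt_of_le hZs (hZmono (le_of_lt (lt_trans h12 hrm.1)))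
  have hd : (sol r).1 * (1 - (sol r).2.2) < 0 :=
    mul_neg_of_pos_of_neg (hX r) (by linarith)
  have hev := (sign_lr_neg (hYzero r hr0) hr0 hd).2
  have hm : Set.Ioo t₁ r ∈ 𝓝[<] r := Ioo_mem_nhdsLT_of_mem ⟨hrm.1, le_rfl⟩
  obtain ⟨u, hu1, hu2⟩ := (hev.and (eventually_of_mem hm (fun x hx => hx))).exists
  linarith [hneg u ⟨hu2.1.le, hu2.2⟩]
end

section
/- Consider the planar ODE system Ẋ = X(σX - (σ+2)W), Ẇ = W(2σX - (σ+2)W) with σ > 0, in the open first quadrant X > 0, W > 0. Every trajectory satisfies the first integral c·K·e^{-((σ+2)/σ)K} = X where K = W/X, for some constant c > 0; equivalently, the quantity (W/X)·e^{-((σ+2)/σ)(W/X)}/X is constant along trajectories. -/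
/-- First integral for the reduced center-manifold flow
`Ẋ = X(σX - (σ+2)W)`, `Ẇ = W(2σX - (σ+2)W)` in the open first quadrant:
`(W/X)·e^{-((σ+2)/σ)(W/X)}/X` is constant along trajectories. -/
theorem center_manifold_first_integral
    (σ : ℝ) (hσ : 0 < σ)
    (sol : ℝ → ℝ × ℝ)
    (hsol : ∀ t : ℝ, HasDerivAt sol
      ((sol t).1 * (σ * (sol t).1 - (σ + 2) * (sol t).2),
       (sol t).2 * (2 * σ * (sol t).1 - (σ + 2) * (sol t).2)) t)
    (hpos : ∀ t : ℝ, 0 < (sol t).1 ∧ 0 < (sol t).2) :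
    ∀ s t : ℝ,
      ((sol s).2 / (sol s).1)
          * Real.exp (-((σ + 2) / σ) * ((sol s).2 / (sol s).1)) / (sol s).1
        = ((sol t).2 / (sol t).1)
          * Real.exp (-((σ + 2) / σ) * ((sol t).2 / (sol t).1)) / (sol t).1 := by
  set g : ℝ → ℝ := fun t =>
    Real.log ((sol t).2) - Real.log ((sol t).1)
      - ((σ + 2) / σ) * ((sol t).2 / (sol t).1) - Real.log ((sol t).1) with hg
  have hX : ∀ t, HasDerivAt (fun t => (sol t).1)
      ((sol t).1 * (σ * (sol t).1 - (σ + 2) * (sol t).2)) t := fun t =>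
    by simpa using ((hsol t).hasFDerivAt.fst).hasDerivAt
  have hW : ∀ t, HasDerivAt (fun t => (sol t).2)
      ((sol t).2 * (2 * σ * (sol t).1 - (σ + 2) * (sol t).2)) t := fun t =>
    by simpa using ((hsol t).hasFDerivAt.snd).hasDerivAt
  have hg0 : ∀ t, HasDerivAt g 0 t := by
    intro t
    obtain ⟨hXt, hWt⟩ := hpos t
    have hXne : (sol t).1 ≠ 0 := ne_of_gt hXt
    have hWne : (sol t).2 ≠ 0 := ne_of_gt hWt
    have hlogX : HasDerivAt (fun t => Real.log ((sol t).1))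
        ((sol t).1⁻¹ * ((sol t).1 * (σ * (sol t).1 - (σ + 2) * (sol t).2))) t :=
      by have := (Real.hasDerivAt_log hXne).comp t (hX t); exact this
    have hlogW : HasDerivAt (fun t => Real.log ((sol t).2))
        ((sol t).2⁻¹ * ((sol t).2 * (2 * σ * (sol t).1 - (σ + 2) * (sol t).2))) t :=
      by have := (Real.hasDerivAt_log hWne).comp t (hW t); exact this
    have hK : HasDerivAt (fun t => (sol t).2 / (sol t).1)
        (((sol t).2 * (2 * σ * (sol t).1 - (σ + 2) * (sol t).2) * (sol t).1
          - (sol t).2 * ((sol t).1 * (σ * (sol t).1 - (σ + 2) * (sol t).2)))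
          / (sol t).1 ^ 2) t := (hW t).div (hX t) hXne
    have := ((hlogW.sub hlogX).sub (hK.const_mul ((σ + 2) / σ))).sub hlogX
    convert this using 1
    · rfl
    · rfl
    · rfl
    field_simp
    ring
  have hdiff : Differentiable ℝ g := fun t => (hg0 t).differentiableAt
  have hconst : ∀ s t : ℝ, g s = g t := by
    intro s t
    exact is_const_of_deriv_eq_zero hdiff (fun x => (hg0 x).deriv) s t
  intro s t
  have key : ∀ u : ℝ,
      ((sol u).2 / (sol u).1)
        * Real.exp (-((σ + 2) / σ) * ((sol u).2 / (sol u).1)) / (sol u).1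
      = Real.exp (g u) := by
    intro u
    obtain ⟨hXu, hWu⟩ := hpos u
    simp only [hg, Real.exp_sub, Real.exp_log hXu, Real.exp_log hWu]
    rw [show -((σ + 2) / σ) * ((sol u).2 / (sol u).1)
        = -(((σ + 2) / σ) * ((sol u).2 / (sol u).1)) by ring, Real.exp_neg]
    field_simp
  rw [key s, key t, hconst s t]
end

section
/- Let m > 1. The system ẋ = x((m-1)y - 2x), ẏ = -y² - (β/α)y + x - xy (the restriction to the invariant plane Z = 0 of the profile phase-space system, with α = (σ+2)/(σ(m-1)), β = 1/σ, σ > 0) satisfies: along the line y = 2x/(m-1) and for 0 < x < X(P₂) where X(P₂) = σ(m-1)²/(2(m+1)(σ+2)) (equivalently (m-1)/(2(m+1)α)), the quantity (m-1)ẏ - 2ẋ evaluated at points of the line equals (2(m+1)/(m-1))·x·(X(P₂) - x) > 0. -/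
/-- Along the line `y = 2x/(m-1)`, for `0 < x < X(P₂)`, the quantity
`(m-1)ẏ - 2ẋ` of the planar system (restriction to `{Z = 0}`) equals
`(2(m+1)/(m-1)) x (X(P₂) - x) > 0`. -/
theorem flow_on_line_in_plane_Z_zero
    (m σ α β : ℝ) (hm : 1 < m) (hσ : 0 < σ)
    (hα : α = (σ + 2) / (σ * (m - 1))) (hβ : β = 1 / σ)
    (x : ℝ) (hx : 0 < x)
    (hx2 : x < σ * (m - 1) ^ 2 / (2 * (m + 1) * (σ + 2))) :
    (m - 1) * (-(2 * x / (m - 1)) ^ 2 - (β / α) * (2 * x / (m - 1)) + x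
        - x * (2 * x / (m - 1)))
      - 2 * (x * ((m - 1) * (2 * x / (m - 1)) - 2 * x))
      = (2 * (m + 1) / (m - 1)) * x
        * (σ * (m - 1) ^ 2 / (2 * (m + 1) * (σ + 2)) - x)
    ∧ 0 < (2 * (m + 1) / (m - 1)) * x
        * (σ * (m - 1) ^ 2 / (2 * (m + 1) * (σ + 2)) - x) := by
  have hm1 : (0 : ℝ) < m - 1 := by linarith
  have hσ2 : (0 : ℝ) < σ + 2 := by linarith
  constructor
  · subst hα hβ
    field_simp
    ring
  · have h1 : 0 < 2 * (m + 1) / (m - 1) := by positivity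
    have h2 : 0 < σ * (m - 1) ^ 2 / (2 * (m + 1) * (σ + 2)) - x := by linarith
    positivity
end

section
/- Let m > 1, σ > 0, α = (σ+2)/(σ(m-1)), β = 1/σ. Fix y₀ with -(m-1)/(σ+2) ≤ y₀ < 0, and additionally y₀ > -1/(m(m-2)) if m > 2. Suppose σ > 2. Then for any X > 0, the expression σX²(y₀-1) + (m-1)y₀³ + (1/(σ+2))[(σ-2)Xy₀(m-1+(σ+2)y₀) + m(m-2)y₀² + y₀] is strictly negative. -/
/-- Sign of `Y''` at a hypothetical tangency point with the plane `{Y = y₀}`: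
the expression is strictly negative under the stated hypotheses. -/
theorem tangency_second_derivative_negative
    (m σ y₀ X : ℝ) (hm : 1 < m) (hσ : 2 < σ)
    (hy₁ : -(m - 1) / (σ + 2) ≤ y₀) (hy₂ : y₀ < 0)
    (hy₃ : 2 < m → -1 / (m * (m - 2)) < y₀)
    (hX : 0 < X) :
    σ * X ^ 2 * (y₀ - 1) + (m - 1) * y₀ ^ 3
      + (1 / (σ + 2)) * ((σ - 2) * X * y₀ * (m - 1 + (σ + 2) * y₀)
        + m * (m - 2) * y₀ ^ 2 + y₀) < 0 := by
  have hs2 : (0:ℝ) < σ + 2 := by linarith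
  have h1 : 0 ≤ m - 1 + (σ + 2) * y₀ := by
    have := (div_le_iff₀ hs2).mp hy₁
    linarith
  have h2 : m * (m - 2) * y₀ ^ 2 + y₀ < 0 := by
    rcases le_or_gt m 2 with h | h
    · have : m * (m - 2) * y₀ ^ 2 ≤ 0 :=
        mul_nonpos_of_nonpos_of_nonneg
          (mul_nonpos_of_nonneg_of_nonpos (by linarith) (by linarith)) (sq_nonneg y₀)
      linarith
    · have hmm : 0 < m * (m - 2) := by nlinarith
      have := hy₃ h
      have h3 : -1 < m * (m - 2) * y₀ := by
        have := (div_lt_iff₀ hmm).mp (by rwa [neg_div] at this)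
        nlinarith
      nlinarith
  have h4 : (σ - 2) * X * y₀ * (m - 1 + (σ + 2) * y₀) ≤ 0 := by
    have : (σ - 2) * X * y₀ < 0 := mul_neg_of_pos_of_neg (mul_pos (by linarith) hX) hy₂
    exact mul_nonpos_of_nonpos_of_nonneg this.le h1
  have h5 : (1 / (σ + 2)) * ((σ - 2) * X * y₀ * (m - 1 + (σ + 2) * y₀)
        + m * (m - 2) * y₀ ^ 2 + y₀) < 0 := by
    apply mul_neg_of_pos_of_neg (by positivity)
    linarith
  have h6 : σ * X ^ 2 * (y₀ - 1) < 0 := mul_neg_of_pos_of_neg (by positivity) (by linarith)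
  have h7 : (m - 1) * y₀ ^ 3 < 0 := by nlinarith [mul_pos (mul_pos (neg_pos.mpr hy₂) (neg_pos.mpr hy₂)) (neg_pos.mpr hy₂)]
  linarith
end
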